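/- Let A_1,…,A_m be n×n real diagonal matrices and let k, p ≥ 1. If n ≥ p((m+1)k − m), then the joint rank (k:p)-matricial range Λ_{(k:p)}(A_1,…,A_m) is non-empty. -/

import Mathlib

open Matrix Kronecker

/-- The joint rank `(k:p)`-matricial range of a tuple `A` of square complex matrices
(rows/columns indexed by a finite type `I` of cardinality `n`, tuple indexed by `J`):
tuples `(D_j)` of `p × p` complex diagonal matrices such that there is an `n × (kp)`
matrix `V` with `V* V = I_{kp}` and `V* A_j V = D_j ⊗ I_k` for all `j`. -/
def matricialRange {I J : Type*} [Fintype I] (k p : ℕ)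
    (A : J → Matrix I I ℂ) : Set (J → Matrix (Fin p) (Fin p) ℂ) :=
  {D | (∀ j, (D j).IsDiag) ∧
    ∃ V : Matrix I (Fin p × Fin k) ℂ, Vᴴ * V = 1 ∧
      ∀ j, Vᴴ * A j * V = (D j) ⊗ₖ (1 : Matrix (Fin k) (Fin k) ℂ)}

/-- The joint rank-`k` numerical range `Λ_k(A) = Λ_{(k:1)}(A)`, with elements identified
with scalar tuples: `x ∈ Λ_k(A)` iff there is `V` with `V* V = I_k` and `V* A_j V = x_j I_k`. -/
def jointRankRange {I J : Type*} [Fintype I] (k : ℕ)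
    (A : J → Matrix I I ℂ) : Set (J → ℂ) :=
  {x | ∃ V : Matrix I (Fin k) ℂ, Vᴴ * V = 1 ∧ ∀ j, Vᴴ * A j * V = x j • 1}

/-- The joint rank-`k` numerical range, projection form: `x ∈ Λ_k(A)` iff there is a
rank-`k` orthogonal projection `P` with `P A_j P = x_j P` for all `j`. -/
def jointRankRangeP {n : ℕ} {J : Type*} (k : ℕ)
    (A : J → Matrix (Fin n) (Fin n) ℂ) : Set (J → ℂ) :=
  {x | ∃ P : Matrix (Fin n) (Fin n) ℂ, P.IsHermitian ∧ P * P = P ∧ P.rank = k ∧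
    ∀ j, P * A j * P = x j • P}

/-!
If the columns of `V` have disjoint supports, `V* diag(g) V` is diagonal, its entries being
weighted sums of the entries of `g` over the supports. So it suffices to split `p` blocks of
`(m + 1)(k - 1) + 1` coordinates each into `k` classes with weights, such that within a block
every class has total weight `1` and the same weighted average of the points
`(d_1 s, …, d_m s) ∈ ℝᵐ`: this is Tverberg's theorem. Tverberg's theorem follows from Bárány's
colourful Carathéodory theorem by Sarkaria's tensor trick, and colourful Carathéodory from
minimising the norm over all colourful convex hulls.
-/

open Module

section LinearConvexity

open Set

variable {E : Type*} [AddCommGroup E] [Module ℝ E]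

lemma exists_sum_smul_eq_of_mem_convexHull_range {ι : Type*} [Fintype ι] {v : ι → E} {x : E}
    (hx : x ∈ convexHull ℝ (range v)) :
    ∃ w : ι → ℝ, (∀ i, 0 ≤ w i) ∧ ∑ i, w i = 1 ∧ ∑ i, w i • v i = x := by
  classical
  rw [convexHull_range_eq_exists_affineCombination] at hx
  obtain ⟨s, w, hw₀, hw₁, rfl⟩ := hx
  refine ⟨fun i => if i ∈ s then w i else 0, fun i => ?_, ?_, ?_⟩
  · dsimp only
    split_ifs with h
    exacts [hw₀ i h, le_rfl]
  · rwa [Finset.sum_ite_mem, Finset.univ_inter]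
  · simp only [ite_smul, zero_smul]
    rw [Finset.sum_ite_mem, Finset.univ_inter,
      s.affineCombination_eq_linear_combination _ _ hw₁]

lemma exists_apply_nonpos_of_zero_mem_convexHull (φ : E →ₗ[ℝ] ℝ) {s : Set E}
    (h : 0 ∈ convexHull ℝ s) : ∃ y ∈ s, φ y ≤ 0 := by
  by_contra! hpos
  have : 0 < φ 0 := convexHull_min hpos (convex_halfSpace_gt φ.isLinear 0) h
  simp at this

lemma apply_eq_of_sum_smul_eq {ι : Type*} [Fintype ι] (φ : E →ₗ[ℝ] ℝ) {z : ι → E}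
    {v : ι → ℝ} (hv : ∀ i, 0 < v i) (hv₁ : ∑ i, v i = 1) {x : E} (hx : ∑ i, v i • z i = x)
    (hle : ∀ i, φ x ≤ φ (z i)) (i : ι) : φ (z i) = φ x := by
  have hsum : ∑ j, v j * (φ (z j) - φ x) = 0 := by
    simp only [mul_sub, Finset.sum_sub_distrib, ← Finset.sum_mul, hv₁, one_mul]
    rw [← hx, map_sum]
    simp [smul_eq_mul]
  have := (Finset.sum_eq_zero_iff_of_nonneg fun j _ =>
    mul_nonneg (hv j).le (sub_nonneg.2 (hle j))).1 hsum i (Finset.mem_univ i)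
  rcases mul_eq_zero.1 this with h | h
  · exact absurd h (hv i).ne'
  · exact sub_eq_zero.1 h

end LinearConvexity

lemma AffineIndependent.card_le_finrank_of_apply_eq {K E ι : Type*} [Field K] [AddCommGroup E]
    [Module K E] [FiniteDimensional K E] [Fintype ι] {z : ι → E} (hz : AffineIndependent K z)
    {φ : E →ₗ[K] K} (hφ : φ ≠ 0) {c : K} (hc : ∀ i, φ (z i) = c) :
    Fintype.card ι ≤ finrank K E := by
  cases isEmpty_or_nonempty ι
  · simp
  have hspan : vectorSpan K (Set.range z) ≤ LinearMap.ker φ := by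
    rw [vectorSpan_def, Submodule.span_le]
    rintro _ ⟨_, ⟨i, rfl⟩, _, ⟨j, rfl⟩, rfl⟩
    simp [hc]
  have hker : finrank K (LinearMap.ker φ) < finrank K E :=
    Submodule.finrank_lt fun h => hφ (LinearMap.ker_eq_top.1 h)
  have := Submodule.finrank_mono hspan
  have := hz.finrank_vectorSpan_add_one
  omega

section InnerProduct

open Set

open scoped RealInnerProductSpace

variable {F : Type*} [NormedAddCommGroup F] [InnerProductSpace ℝ F]

lemma real_inner_self_le_inner_of_isMinOn_norm {K : Set F} (hK : Convex ℝ K) {y z : F}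
    (hy : y ∈ K) (hz : z ∈ K) (hmin : IsMinOn (‖·‖) K y) : ⟪y, y⟫ ≤ ⟪y, z⟫ := by
  have : Nonempty K := ⟨⟨y, hy⟩⟩
  have hinf : ‖0 - y‖ = ⨅ w : K, ‖0 - (w : F)‖ := by
    refine le_antisymm (le_ciInf fun w => by simpa using hmin w.2) ?_
    exact ciInf_le ⟨0, forall_mem_range.2 fun _ => norm_nonneg _⟩ (⟨y, hy⟩ : K)
  have := (norm_eq_iInf_iff_real_inner_le_zero hK hy).1 hinf z hz
  simp only [zero_sub, inner_neg_left, inner_sub_right] at this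
  linarith

lemma exists_mem_convexHull_update_of_le_inner [FiniteDimensional ℝ F] {ι κ : Type*}
    [Fintype ι] [DecidableEq ι] (hcard : finrank ℝ F < Fintype.card ι) (f : ι → κ → F)
    {l : ι → κ} {Y : F} (hY : Y ≠ 0) (hYl : Y ∈ convexHull ℝ (range fun i => f i (l i)))
    (hle : ∀ i, ⟪Y, Y⟫ ≤ ⟪Y, f i (l i)⟫) :
    ∃ i₀, ∀ q, Y ∈ convexHull ℝ (range fun i => f i (Function.update l i₀ q i)) := by
  have hφ : innerₛₗ ℝ Y ≠ 0 := fun h => hY (by simpa using LinearMap.congr_fun h Y)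
  -- By Carathéodory, `Y` is a positive combination of affinely independent points `z j`;
  -- `hle` puts them all on the hyperplane `⟪Y, ·⟫ = ‖Y‖²`, so there are fewer than `card ι`.
  obtain ⟨ι', _, z, v, hz, hindep, hv, hv₁, hYz⟩ := eq_pos_convex_span_of_mem_convexHull hYl
  choose g hg using fun j => hz ⟨j, rfl⟩
  have hzY : ∀ j, innerₛₗ ℝ Y (z j) = ⟪Y, Y⟫ :=
    apply_eq_of_sum_smul_eq _ hv hv₁ hYz fun j => by simpa [← hg j] using hle (g j)
  have hcard' : Fintype.card ι' < Fintype.card ι :=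
    (hindep.card_le_finrank_of_apply_eq hφ hzY).trans_lt hcard
  obtain ⟨i₀, hi₀⟩ : ∃ i₀, ∀ j, g j ≠ i₀ := by
    by_contra! hsurj
    exact (Fintype.card_le_of_surjective g hsurj).not_gt hcard'
  refine ⟨i₀, fun q => mem_convexHull_of_exists_fintype v z (fun j => (hv j).le) hv₁
    (fun j => ⟨g j, ?_⟩) hYz⟩
  simp [Function.update_of_ne (hi₀ j), hg]

theorem exists_zero_mem_convexHull_colorful [FiniteDimensional ℝ F] {ι κ : Type*} [Fintype ι]
    [Finite κ] (hcard : finrank ℝ F < Fintype.card ι) (f : ι → κ → F)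
    (hf : ∀ i, (0 : F) ∈ convexHull ℝ (range (f i))) :
    ∃ l : ι → κ, (0 : F) ∈ convexHull ℝ (range fun i => f i (l i)) := by
  classical
  set C : (ι → κ) → Set F := fun l => convexHull ℝ (range fun i => f i (l i))
  have : Nonempty ι := Fintype.card_pos_iff.1 (by omega)
  have : Nonempty κ :=
    range_nonempty_iff_nonempty.1 (convexHull_nonempty_iff.1 ⟨0, hf (Classical.arbitrary ι)⟩)
  have hne : (⋃ l, C l).Nonempty :=
    (convexHull_nonempty_iff.2 (range_nonempty _)).mono (subset_iUnion C (Classical.arbitrary _))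
  obtain ⟨Y, hYmem, hmin⟩ := (isCompact_iUnion fun l => (finite_range _).isCompact_convexHull
    (𝕜 := ℝ)).exists_isMinOn hne continuous_norm.continuousOn
  have hvar : ∀ l, Y ∈ C l → ∀ z ∈ C l, ⟪Y, Y⟫ ≤ ⟪Y, z⟫ := fun l hYl z hz =>
    real_inner_self_le_inner_of_isMinOn_norm (convex_convexHull ℝ _) hYl hz
      (hmin.on_subset (subset_iUnion C l))
  obtain ⟨l, hYl⟩ := mem_iUnion.1 hYmem
  refine ⟨l, ?_⟩
  convert hYl
  by_contra! hY
  obtain ⟨i₀, hi₀⟩ := exists_mem_convexHull_update_of_le_inner hcard f hY.symm hYl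
    fun i => hvar l hYl _ (subset_convexHull ℝ _ ⟨i, rfl⟩)
  -- Recolouring `i₀` by a point on the far side of the hyperplane `⟪Y, ·⟫ = 0`
  -- would give a colourful hull containing points closer to `0` than `Y`.
  obtain ⟨_, ⟨q, rfl⟩, hq⟩ := exists_apply_nonpos_of_zero_mem_convexHull (innerₛₗ ℝ Y) (hf i₀)
  have := hvar _ (hi₀ q) (f i₀ q) (subset_convexHull ℝ _ ⟨i₀, by simp⟩)
  rw [innerₛₗ_apply_apply] at hq
  linarith [real_inner_self_pos.2 hY.symm]

end InnerProduct

section Tverberg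

open Set

-- `e₀, …, e_{k-1}, -(e₀ + ⋯ + e_{k-1})`: `k + 1` vectors of `ℝᵏ` whose only linear relations
-- are the constant ones.
def sarkariaVec (k : ℕ) : Fin (k + 1) → Fin k → ℝ :=
  Fin.lastCases (-1) fun c => Pi.single c 1

lemma sum_sarkariaVec (k : ℕ) : ∑ c, sarkariaVec k c = 0 := by
  simp only [sarkariaVec, Fin.sum_univ_castSucc, Fin.lastCases_castSucc, Fin.lastCases_last]
  rw [Finset.univ_sum_single (fun _ => (1 : ℝ))]
  exact add_neg_cancel 1

lemma eq_of_sum_smul_sarkariaVec_eq_zero {k : ℕ} {z : Fin (k + 1) → ℝ}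
    (h : ∑ c, z c • sarkariaVec k c = 0) (c : Fin (k + 1)) : z c = z (Fin.last k) := by
  induction c using Fin.lastCases with
  | last => rfl
  | cast r =>
    have := congrFun h r
    simp only [sarkariaVec, Finset.sum_apply, Pi.smul_apply, smul_eq_mul, Fin.sum_univ_castSucc,
      Fin.lastCases_castSucc, Pi.single_apply, mul_ite, mul_one, mul_zero, Finset.sum_ite_eq,
      Finset.mem_univ, ↓reduceIte, Fin.lastCases_last, Pi.neg_apply, Pi.one_apply, mul_neg,
      Pi.zero_apply] at this
    linarith

lemma sum_filter_smul_eq_of_sum_smul_sarkariaVec_mul_eq_zero {ι M : Type*} [Fintype ι] {k : ℕ}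
    (l : ι → Fin (k + 1)) (w : ι → ℝ) (b : ι → M → ℝ)
    (h : ∑ i, w i • (fun rt : Fin k × M => sarkariaVec k (l i) rt.1 * b i rt.2) = 0)
    (c : Fin (k + 1)) :
    ∑ i with l i = c, w i • b i = ∑ i with l i = Fin.last k, w i • b i := by
  funext t
  simp only [Finset.sum_apply, Pi.smul_apply, smul_eq_mul]
  refine eq_of_sum_smul_sarkariaVec_eq_zero (z := fun c => ∑ i with l i = c, w i * b i t) ?_ c
  funext r
  have := congrFun h (r, t)
  simp only [Finset.sum_apply, Pi.smul_apply, smul_eq_mul, Pi.zero_apply] at this ⊢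
  rw [← this, ← Finset.sum_fiberwise Finset.univ l]
  refine Finset.sum_congr rfl fun c _ => ?_
  rw [Finset.sum_mul]
  refine Finset.sum_congr rfl fun i hi => ?_
  rw [(Finset.mem_filter.1 hi).2]
  ring

theorem exists_tverberg_partition {ι : Type*} [Fintype ι] {m k : ℕ}
    (hcard : (m + 1) * k < Fintype.card ι) (a : ι → Fin m → ℝ) :
    ∃ (l : ι → Fin (k + 1)) (w : ι → ℝ) (x : Fin m → ℝ), (∀ i, 0 ≤ w i) ∧
      ∀ c, ∑ i with l i = c, w i = 1 ∧ ∑ i with l i = c, w i • a i = x := by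
  classical
  -- Sarkaria's lifting: for a colourful combination of the `F i (l i)` vanishing, the weighted
  -- sums of the `b i = (1, a i)` over the classes of `l` must all be equal.
  set b : ι → Fin (m + 1) → ℝ := fun i => Fin.cons 1 (a i)
  set F : ι → Fin (k + 1) → EuclideanSpace ℝ (Fin k × Fin (m + 1)) :=
    fun i c => WithLp.toLp 2 fun rt => sarkariaVec k c rt.1 * b i rt.2
  have hF : ∀ i, 0 ∈ convexHull ℝ (range (F i)) := fun i => by
    refine mem_convexHull_of_exists_fintype (fun _ => ((k : ℝ) + 1)⁻¹) (F i)
      (fun _ => by positivity) ?_ (fun c => ⟨c, rfl⟩) ?_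
    · rw [Finset.sum_const, Finset.card_univ, Fintype.card_fin, nsmul_eq_mul]
      push_cast
      exact mul_inv_cancel₀ (by positivity)
    · ext rt
      have := congrFun (sum_sarkariaVec k) rt.1
      simp only [Finset.sum_apply, Pi.zero_apply] at this
      simp [F, ← Finset.smul_sum, ← Finset.sum_mul, this]
  have hdim : finrank ℝ (EuclideanSpace ℝ (Fin k × Fin (m + 1))) < Fintype.card ι := by
    simpa [mul_comm] using hcard
  obtain ⟨l, hl⟩ := exists_zero_mem_convexHull_colorful hdim F hF
  obtain ⟨w, hw₀, hw₁, hw⟩ := exists_sum_smul_eq_of_mem_convexHull_range hl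
  set s : Fin (k + 1) → Fin (m + 1) → ℝ := fun c => ∑ i with l i = c, w i • b i
  have hs : ∀ c, s c = s (Fin.last k) :=
    sum_filter_smul_eq_of_sum_smul_sarkariaVec_mul_eq_zero l w b
      (by simpa [F] using congrArg WithLp.ofLp hw)
  have hs₀ : ∀ c, s c 0 = ∑ i with l i = c, w i := fun c => by simp [s, b, Finset.sum_apply]
  have hs_succ : ∀ c, (fun j => s c j.succ) = ∑ i with l i = c, w i • a i := fun c => by
    funext j; simp [s, b, Finset.sum_apply]
  have hlast : ((k : ℝ) + 1) * s (Fin.last k) 0 = 1 := calc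
    _ = ∑ c, s c 0 := by simp [hs]
    _ = 1 := by simp_rw [hs₀]; rwa [Finset.sum_fiberwise]
  refine ⟨l, fun i => ((k : ℝ) + 1) * w i, ((k : ℝ) + 1) • fun j => s (Fin.last k) j.succ,
    fun i => mul_nonneg (by positivity) (hw₀ i), fun c => ⟨?_, ?_⟩⟩
  · rw [← Finset.mul_sum, ← hs₀, hs, hlast]
  · simp_rw [mul_smul, ← Finset.smul_sum, ← hs_succ, hs]

end Tverberg

section MatricialRange

open Matrix Kronecker

lemma conjTranspose_one_submatrix_mul_mul {R I I' : Type*} [Semiring R] [StarRing R]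
    [Fintype I] [DecidableEq I] (φ : I' → I) (M : Matrix I I R) :
    ((1 : Matrix I I R).submatrix id φ)ᴴ * M * (1 : Matrix I I R).submatrix id φ =
      M.submatrix φ φ := by
  ext i j
  simp [conjTranspose_submatrix, mul_apply, one_apply]

lemma matricialRange_submatrix_subset {I I' J : Type*} [Fintype I] [Fintype I'] {φ : I' → I}
    (hφ : Function.Injective φ) (k p : ℕ) (A : J → Matrix I I ℂ) :
    matricialRange k p (fun j => (A j).submatrix φ φ) ⊆ matricialRange k p A := by
  classical
  rintro D ⟨hD, V, hV, hVA⟩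
  let E : Matrix I I' ℂ := (1 : Matrix I I ℂ).submatrix id φ
  have hE : ∀ M : Matrix I I ℂ, (E * V)ᴴ * M * (E * V) = Vᴴ * M.submatrix φ φ * V := fun M => by
    rw [← conjTranspose_one_submatrix_mul_mul φ M, conjTranspose_mul]
    simp only [Matrix.mul_assoc]
    rfl
  refine ⟨hD, E * V, ?_, fun j => ?_⟩
  · have h1 := hE 1
    rw [Matrix.mul_one, submatrix_one φ hφ, Matrix.mul_one] at h1
    rw [h1, hV]
  · rw [hE, hVA]

variable {α β : Type*} [Fintype β] [DecidableEq α] [DecidableEq β]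

noncomputable def fiberWeightMatrix (σ : β → α) (w : β → ℝ) : Matrix β α ℂ :=
  of fun s a => if σ s = a then ((√(w s) : ℝ) : ℂ) else 0

lemma conjTranspose_fiberWeightMatrix_mul_diagonal_mul (σ : β → α) {w : β → ℝ}
    (hw : ∀ s, 0 ≤ w s) (g : β → ℝ) :
    (fiberWeightMatrix σ w)ᴴ * diagonal (fun s => (g s : ℂ)) * fiberWeightMatrix σ w =
      diagonal fun a => ((∑ s with σ s = a, w s * g s : ℝ) : ℂ) := by
  ext a a'
  have hterm : ∀ s, star (fiberWeightMatrix σ w s a) * (g s : ℂ) * fiberWeightMatrix σ w s a' =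
      if σ s = a ∧ σ s = a' then ((w s * g s : ℝ) : ℂ) else 0 := fun s => by
    by_cases ha : σ s = a
    · by_cases ha' : σ s = a'
      · subst ha ha'
        simp only [fiberWeightMatrix, of_apply, if_true, and_self, Complex.star_def,
          Complex.conj_ofReal]
        have := congrArg Complex.ofReal (Real.mul_self_sqrt (hw s))
        push_cast at this ⊢
        linear_combination (g s : ℂ) * this
      · simp [fiberWeightMatrix, ha']
    · simp [fiberWeightMatrix, ha]
  rw [mul_apply, diagonal_apply]
  simp only [mul_diagonal, conjTranspose_apply, hterm]
  split_ifs with h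
  · subst h
    simp only [and_self, Finset.sum_filter, Complex.ofReal_sum, apply_ite Complex.ofReal,
      Complex.ofReal_zero]
  · exact Finset.sum_eq_zero fun s _ => if_neg fun hs => h (hs.1.symm.trans hs.2)

lemma diagonal_mem_matricialRange {ι J : Type*} [Fintype ι] [DecidableEq ι] {k p : ℕ}
    (d : J → Fin p × ι → ℝ) (l : Fin p → ι → Fin k) (w : Fin p → ι → ℝ) (x : Fin p → J → ℝ)
    (hw₀ : ∀ q i, 0 ≤ w q i)
    (hw₁ : ∀ q c, ∑ i with l q i = c, w q i = 1)
    (hx : ∀ q c j, ∑ i with l q i = c, w q i * d j (q, i) = x q j) :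
    (fun j => diagonal fun q => (x q j : ℂ)) ∈
      matricialRange k p fun j => diagonal fun s => (d j s : ℂ) := by
  set σ : Fin p × ι → Fin p × Fin k := fun s => (s.1, l s.1 s.2)
  have hσ : ∀ (g : Fin p × ι → ℝ) q c,
      ∑ s with σ s = (q, c), g s = ∑ i with l q i = c, g (q, i) := fun g q c => by
    simp [σ, Finset.sum_filter, Fintype.sum_prod_type, Prod.ext_iff, ite_and]
  have hV := conjTranspose_fiberWeightMatrix_mul_diagonal_mul σ (fun s => hw₀ s.1 s.2)
  refine ⟨fun j => isDiag_diagonal _, fiberWeightMatrix σ fun s => w s.1 s.2, ?_, fun j => ?_⟩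
  · simpa [hσ, hw₁] using hV 1
  · rw [hV, ← diagonal_one, diagonal_kronecker_diagonal]
    congr 1
    ext ⟨q, c⟩
    simp [hσ, hx]

lemma matricialRange_diagonal_nonempty {ι : Type*} [Fintype ι] [DecidableEq ι] {m k p : ℕ}
    (hcard : (m + 1) * k < Fintype.card ι) (d : Fin m → Fin p × ι → ℝ) :
    (matricialRange (k + 1) p fun j => diagonal fun s => (d j s : ℂ)).Nonempty := by
  choose l w x hw₀ hw using fun q : Fin p => exists_tverberg_partition hcard fun i j => d j (q, i)
  refine ⟨_, diagonal_mem_matricialRange d l w x hw₀ (fun q c => (hw q c).1) fun q c j => ?_⟩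
  simpa [Finset.sum_apply] using congrFun (hw q c).2 j

end MatricialRange

theorem stmt16_general (n m k p : ℕ) (hk : 1 ≤ k)
    (d : Fin m → Fin n → ℝ)
    (hn : p * ((m + 1) * k - m) ≤ n) :
    (matricialRange k p (fun i => Matrix.diagonal fun j => ((d i j : ℝ) : ℂ))).Nonempty := by
  obtain ⟨k, rfl⟩ : ∃ k', k = k' + 1 := ⟨k - 1, by omega⟩
  have hN : p * ((m + 1) * k + 1) ≤ n := by
    convert hn using 2
    rw [Nat.mul_succ]
    omega
  let φ : Fin p × Fin ((m + 1) * k + 1) → Fin n := Fin.castLE hN ∘ finProdFinEquiv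
  have hφ : Function.Injective φ := (Fin.castLE_injective hN).comp finProdFinEquiv.injective
  obtain ⟨D, hD⟩ := matricialRange_diagonal_nonempty
    (by rw [Fintype.card_fin]; exact Nat.lt_succ_self _) fun j => d j ∘ φ
  refine ⟨D, matricialRange_submatrix_subset hφ _ _ _ ?_⟩
  simp only [submatrix_diagonal _ _ hφ]
  exact hD

/-- Proposition 4.5 (2): For `n × n` real diagonal matrices
`A_1,…,A_m` and `k, p ≥ 1`, if `n ≥ p((m+1)k - m)` then the joint rank
`(k:p)`-matricial range `Λ_{(k:p)}(A_1,…,A_m)` is nonempty. -/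
theorem stmt16 (n m k p : ℕ) (hk : 1 ≤ k) (hp : 1 ≤ p)
    (d : Fin m → Fin n → ℝ)
    (hn : p * ((m + 1) * k - m) ≤ n) :
    (matricialRange k p (fun i => Matrix.diagonal fun j => ((d i j : ℝ) : ℂ))).Nonempty :=
  stmt16_general n m k p hk d hn
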